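/- Expansion preserves the continued fraction value: if A = (c_1, d_1, c_2, …, d_n, c_{n+1}) is an odd-length list of nonzero even integers, then the continued fraction of the expanded form A_e is well-defined (every proper tail value of A_e is nonzero) and its value equals the continued fraction value of A: [A_e] = [A] in ℚ. -/
import Mathlib


/-- The value of a finite continued fraction `[a_1, …, a_n] = a_1 + 1/(a_2 + 1/(⋯ + 1/a_n))`,
with junk value `0` on the empty list. -/
def cfVal : List ℤ → ℚ
  | [] => 0
  | [a] => (a : ℚ)
  | a :: b :: l => (a : ℚ) + (cfVal (b :: l))⁻¹

/-- For a nonzero even integer `c` with sign `s`, the alternating block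
`B(c) = (2s, 0, 2s, 0, …, 0, 2s)` of length `|c| - 1`; in particular `B(±2) = (±2)`. -/
def block (c : ℤ) : List ℤ :=
  List.intersperse 0 (List.replicate (c.natAbs / 2) (2 * c.sign))

/-- The odd-length list `(c_1, d_1, c_2, d_2, …, d_n, c_{n+1})` encoded by its first entry
`c_1` and the list of pairs `((d_1, c_2), (d_2, c_3), …, (d_n, c_{n+1}))`. -/
def oddSeq : ℤ → List (ℤ × ℤ) → List ℤ
  | c, [] => [c]
  | c, (d, c') :: r => c :: d :: oddSeq c' r

/-- The expanded form `A_e = B(c_1) ++ (d_1) ++ B(c_2) ++ (d_2) ++ … ++ (d_n) ++ B(c_{n+1})`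
of the odd-length list `A = (c_1, d_1, …, d_n, c_{n+1})`. -/
def expandSeq : ℤ → List (ℤ × ℤ) → List ℤ
  | c, [] => block c
  | c, (d, c') :: r => block c ++ d :: expandSeq c' r

open List

lemma cfVal_cons (a : ℤ) (X : List ℤ) (h : X ≠ []) :
    cfVal (a :: X) = (a : ℚ) + (cfVal X)⁻¹ := by
  match X with
  | [] => exact absurd rfl h
  | b :: l => rfl

lemma cfVal_a0 (a : ℤ) (X : List ℤ) (h : X ≠ []) :
    cfVal (a :: 0 :: X) = (a : ℚ) + cfVal X := by
  rw [cfVal_cons a (0 :: X) (by simp), cfVal_cons 0 X h]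
  push_cast
  simp

lemma inter_head (a : ℤ) (k : ℕ) :
    ∃ t, intersperse 0 (replicate (k + 1) a) = a :: t := by
  cases k with
  | zero => exact ⟨[], rfl⟩
  | succ k =>
    exact ⟨0 :: intersperse 0 (replicate (k + 1) a), by
      rw [show replicate (k + 2) a = a :: a :: replicate k a from rfl,
        intersperse_cons_cons]
      rfl⟩

lemma inter_ne_nil (a : ℤ) (k : ℕ) :
    intersperse 0 (replicate (k + 1) a) ≠ [] := by
  obtain ⟨t, ht⟩ := inter_head a k
  simp [ht]

lemma ival (a : ℤ) : ∀ (k : ℕ) (T : List ℤ),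
    cfVal (intersperse 0 (replicate (k + 1) a) ++ T)
      = ((k : ℚ) + 1) * a + (if T = [] then 0 else (cfVal T)⁻¹)
  | 0, T => by
    cases T with
    | nil => simp [cfVal]
    | cons b t =>
      rw [show intersperse 0 (replicate 1 a) = [a] from rfl]
      rw [show ([a] : List ℤ) ++ b :: t = a :: b :: t from rfl]
      rw [cfVal_cons a (b :: t) (by simp)]
      simp
  | (k + 1), T => by
    rw [show replicate (k + 2) a = a :: a :: replicate k a from rfl,
      intersperse_cons_cons,
      show a :: (0 : ℤ) :: intersperse 0 (a :: replicate k a) ++ T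
        = a :: 0 :: (intersperse 0 (replicate (k + 1) a) ++ T) from rfl]
    have hne : intersperse 0 (replicate (k + 1) a) ++ T ≠ [] := by
      obtain ⟨t, ht⟩ := inter_head a k
      simp [ht]
    rw [cfVal_a0 a _ hne, ival a k T]
    push_cast
    ring

lemma isuffix (a : ℤ) : ∀ (k : ℕ) (s : List ℤ),
    s <:+ intersperse 0 (replicate (k + 1) a) →
    s = [] ∨ ∃ j : ℕ, s = intersperse 0 (replicate (j + 1) a) ∨
      s = 0 :: intersperse 0 (replicate (j + 1) a)
  | 0, s, hs => by
    rw [show intersperse 0 (replicate 1 a) = [a] from rfl] at hs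
    rcases suffix_cons_iff.1 hs with h | h
    · exact Or.inr ⟨0, Or.inl h⟩
    · left; exact suffix_nil.1 h
  | (k + 1), s, hs => by
    rw [show replicate (k + 2) a = a :: a :: replicate k a from rfl,
      intersperse_cons_cons] at hs
    rcases suffix_cons_iff.1 hs with h | h
    · refine Or.inr ⟨k + 1, Or.inl ?_⟩
      rw [show replicate (k + 2) a = a :: a :: replicate k a from rfl,
        intersperse_cons_cons]
      exact h
    · rcases suffix_cons_iff.1 h with h' | h'
      · exact Or.inr ⟨k, Or.inr h'⟩
      · exact isuffix a k s h'

lemma suffix_append_cases {l A T : List ℤ} (h : l <:+ A ++ T) :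
    l <:+ T ∨ ∃ s, s <:+ A ∧ l = s ++ T := by
  obtain ⟨p, hp⟩ := h
  rcases List.append_eq_append_iff.1 hp with ⟨a', h1, h2⟩ | ⟨c', h1, h2⟩
  · exact Or.inr ⟨a', ⟨p, h1.symm⟩, h2⟩
  · exact Or.inl ⟨c', h2.symm⟩

lemma mag {m q : ℚ} (hm : 2 ≤ |m|) (hq : |q| < 1) : 1 < |m + q| := by
  have h : |m| ≤ |m + q| + |q| := by
    have := abs_add_le (m + q) (-q)
    simpa using this
  linarith

lemma two_le_abs_q {x : ℤ} (h0 : x ≠ 0) (he : Even x) : 2 ≤ |(x : ℚ)| := by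
  obtain ⟨m, rfl⟩ := he
  have hm : m ≠ 0 := by rintro rfl; simp at h0
  have h1 : (1 : ℚ) ≤ |(m : ℚ)| := by
    have : (1 : ℤ) ≤ |m| := Int.one_le_abs hm
    calc (1 : ℚ) ≤ ((|m| : ℤ) : ℚ) := by exact_mod_cast this
    _ = |(m : ℚ)| := by push_cast; rfl
  push_cast
  rw [show (m : ℚ) + m = 2 * m by ring, abs_mul]
  rw [show |(2 : ℚ)| = 2 by norm_num]
  linarith

lemma block_rep (c : ℤ) (hc : c ≠ 0) (hce : Even c) :
    ∃ k : ℕ, block c = intersperse 0 (replicate (k + 1) (2 * c.sign)) ∧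
      ((k : ℚ) + 1) * ((2 * c.sign : ℤ) : ℚ) = (c : ℚ) := by
  have hna : c.natAbs ≠ 0 := Int.natAbs_ne_zero.2 hc
  have hev : c.natAbs % 2 = 0 := Nat.even_iff.1 (Int.natAbs_even.2 hce)
  have h2 : 2 ≤ c.natAbs := by omega
  refine ⟨c.natAbs / 2 - 1, ?_, ?_⟩
  · rw [block, show c.natAbs / 2 - 1 + 1 = c.natAbs / 2 by omega]
  · have key : ((c.natAbs / 2 : ℕ) : ℤ) * (2 * c.sign) = c := by
      rw [show ((c.natAbs / 2 : ℕ) : ℤ) * (2 * c.sign)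
        = c.sign * (2 * ((c.natAbs / 2 : ℕ) : ℤ)) from by ring]
      rw [show (2 * ((c.natAbs / 2 : ℕ) : ℤ)) = (c.natAbs : ℤ) from by
        exact_mod_cast congrArg (Nat.cast : ℕ → ℤ) (by omega : 2 * (c.natAbs / 2) = c.natAbs)]
      exact Int.sign_mul_natAbs c
    have hk1 : ((c.natAbs / 2 - 1 : ℕ) : ℚ) + 1 = ((c.natAbs / 2 : ℕ) : ℚ) := by
      have : (c.natAbs / 2 - 1) + 1 = c.natAbs / 2 := by omega
      exact_mod_cast congrArg (Nat.cast : ℕ → ℚ) this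
    rw [hk1]
    have h := congrArg (Int.cast : ℤ → ℚ) key
    rw [Int.cast_mul] at h
    rwa [Int.cast_natCast] at h

lemma blockAppend (c : ℤ) (hc : c ≠ 0) (hce : Even c) (T : List ℤ)
    (hT : T = [] ∨ 1 < |cfVal T|)
    (hTs : ∀ l, l ≠ [] → l <:+ T → cfVal l ≠ 0) :
    cfVal (block c ++ T) = (c : ℚ) + (if T = [] then 0 else (cfVal T)⁻¹) ∧
    1 < |cfVal (block c ++ T)| ∧
    ∀ l, l ≠ [] → l <:+ block c ++ T → cfVal l ≠ 0 := by
  obtain ⟨k, hb, hk⟩ := block_rep c hc hce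
  set a := 2 * c.sign with ha_def
  have ha : |(a : ℚ)| = 2 := by
    have hs : c.sign = 1 ∨ c.sign = -1 := by
      rcases hc.lt_or_gt with h | h
      · right; exact Int.sign_eq_neg_one_of_neg h
      · left; exact Int.sign_eq_one_of_pos h
    rcases hs with h | h <;> simp [ha_def, h]
  have hqT : |if T = [] then (0 : ℚ) else (cfVal T)⁻¹| < 1 := by
    rcases hT with rfl | hT
    · simp
    · have hTne : T ≠ [] := by
        rintro rfl
        rw [show cfVal [] = 0 from rfl] at hT
        norm_num at hT
      rw [if_neg hTne, abs_inv]
      have h0 : 0 < |cfVal T| := by linarith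
      rw [inv_lt_one_iff₀]
      right; exact hT
  have hmag : ∀ j : ℕ, 1 < |cfVal (intersperse 0 (replicate (j + 1) a) ++ T)| := by
    intro j
    rw [ival]
    apply mag _ hqT
    rw [abs_mul, ha]
    have h1 : (1 : ℚ) ≤ (j : ℚ) + 1 := by
      have : (0 : ℚ) ≤ (j : ℚ) := Nat.cast_nonneg j
      linarith
    have : |(j : ℚ) + 1| = (j : ℚ) + 1 := abs_of_pos (by positivity)
    rw [this]; linarith
  refine ⟨?_, ?_, ?_⟩
  · rw [hb, ival, hk]
  · rw [hb]; exact hmag k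
  · intro l hl hsuf
    rw [hb] at hsuf
    rcases suffix_append_cases hsuf with h | ⟨s, hs, rfl⟩
    · exact hTs l hl h
    · rcases isuffix a k s hs with rfl | ⟨j, rfl | rfl⟩
      · simp only [nil_append]
        exact hTs _ hl (suffix_refl T)
      · intro h0
        have := hmag j
        rw [h0] at this
        norm_num at this
      · have hne : intersperse 0 (replicate (j + 1) a) ++ T ≠ [] := by
          obtain ⟨t, ht⟩ := inter_head a j
          simp [ht]
        rw [show ((0 : ℤ) :: intersperse 0 (replicate (j + 1) a)) ++ T
          = (0 : ℤ) :: (intersperse 0 (replicate (j + 1) a) ++ T) from rfl]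
        rw [cfVal_cons 0 _ hne]
        push_cast
        rw [zero_add]
        apply inv_ne_zero
        intro h0
        have := hmag j
        rw [h0] at this
        norm_num at this

lemma oddSeq_ne_nil (c : ℤ) (r : List (ℤ × ℤ)) : oddSeq c r ≠ [] := by
  cases r with
  | nil => simp [oddSeq]
  | cons p r => obtain ⟨d, c'⟩ := p; simp [oddSeq]

lemma mem_oddSeq_self (c : ℤ) (r : List (ℤ × ℤ)) : c ∈ oddSeq c r := by
  cases r with
  | nil => simp [oddSeq]
  | cons p r => obtain ⟨d, c'⟩ := p; simp [oddSeq]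

lemma expandSeq_ne_nil (c : ℤ) (r : List (ℤ × ℤ)) (hc : c ≠ 0) (hce : Even c) :
    expandSeq c r ≠ [] := by
  obtain ⟨k, hb, _⟩ := block_rep c hc hce
  cases r with
  | nil => rw [show expandSeq c [] = block c from rfl, hb]; exact inter_ne_nil _ _
  | cons p r =>
    obtain ⟨d, c'⟩ := p
    rw [show expandSeq c ((d, c') :: r) = block c ++ d :: expandSeq c' r from rfl, hb]
    obtain ⟨t, ht⟩ := inter_head (2 * c.sign) k
    simp [ht]

lemma main_lemma : ∀ (r : List (ℤ × ℤ)) (c : ℤ),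
    (∀ x ∈ oddSeq c r, x ≠ 0 ∧ Even x) →
    cfVal (expandSeq c r) = cfVal (oddSeq c r) ∧
    1 < |cfVal (expandSeq c r)| ∧
    ∀ l, l ≠ [] → l <:+ expandSeq c r → cfVal l ≠ 0 := by
  intro r
  induction r with
  | nil =>
    intro c h
    obtain ⟨hc0, hce⟩ := h c (by simp [oddSeq])
    obtain ⟨hv, hm, hs⟩ := blockAppend c hc0 hce [] (Or.inl rfl)
      (by intro l hl hsuf; exact absurd (suffix_nil.1 hsuf) hl)
    rw [append_nil] at hv hm hs
    refine ⟨?_, ?_, ?_⟩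
    · rw [show expandSeq c [] = block c from rfl, hv]
      simp [oddSeq, cfVal]
    · rw [show expandSeq c [] = block c from rfl]; exact hm
    · rw [show expandSeq c [] = block c from rfl]; exact hs
  | cons p r' ih =>
    obtain ⟨d, c'⟩ := p
    intro c h
    obtain ⟨hc0, hce⟩ := h c (by simp [oddSeq])
    obtain ⟨hd0, hde⟩ := h d (by simp [oddSeq])
    have h' : ∀ x ∈ oddSeq c' r', x ≠ 0 ∧ Even x := by
      intro x hx; exact h x (by simp [oddSeq, hx])
    obtain ⟨hc'0, hc'e⟩ := h' c' (mem_oddSeq_self c' r')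
    obtain ⟨ihv, ihm, ihs⟩ := ih c' h'
    have hE'ne : expandSeq c' r' ≠ [] := expandSeq_ne_nil c' r' hc'0 hc'e
    have hTval : cfVal (d :: expandSeq c' r') = (d : ℚ) + (cfVal (expandSeq c' r'))⁻¹ :=
      cfVal_cons d _ hE'ne
    have hTmag : 1 < |cfVal (d :: expandSeq c' r')| := by
      rw [hTval]
      apply mag (two_le_abs_q hd0 hde)
      rw [abs_inv, inv_lt_one_iff₀]
      right; exact ihm
    have hTs : ∀ l, l ≠ [] → l <:+ d :: expandSeq c' r' → cfVal l ≠ 0 := by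
      intro l hl hsuf
      rcases suffix_cons_iff.1 hsuf with rfl | h'
      · intro h0; rw [h0] at hTmag; norm_num at hTmag
      · exact ihs l hl h'
    obtain ⟨hv, hm, hs⟩ := blockAppend c hc0 hce (d :: expandSeq c' r')
      (Or.inr hTmag) hTs
    have hexp : expandSeq c ((d, c') :: r') = block c ++ d :: expandSeq c' r' := rfl
    refine ⟨?_, ?_, ?_⟩
    · rw [hexp, hv, if_neg (by simp : (d :: expandSeq c' r') ≠ [])]
      rw [show oddSeq c ((d, c') :: r') = c :: d :: oddSeq c' r' from rfl]
      rw [cfVal_cons c (d :: oddSeq c' r') (by simp),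
        cfVal_cons d (oddSeq c' r') (oddSeq_ne_nil c' r'),
        hTval, ihv]
    · rw [hexp]; exact hm
    · rw [hexp]; exact hs

/-- Expansion preserves the continued fraction value: if `A = (c_1, d_1, …, d_n, c_{n+1})` is
an odd-length list of nonzero even integers, then every proper tail value of the expanded
form `A_e` (the value of every nonempty suffix of the tail of `A_e`) is nonzero — so the
continued fraction of `A_e` is well-defined — and `[A_e] = [A]` in `ℚ`. -/
theorem expand_preserves_cf (c : ℤ) (r : List (ℤ × ℤ))
    (hA : ∀ x ∈ oddSeq c r, x ≠ 0 ∧ Even x) :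
    (∀ l, l ≠ [] → l <:+ (expandSeq c r).tail → cfVal l ≠ 0) ∧
      cfVal (expandSeq c r) = cfVal (oddSeq c r) := by
  obtain ⟨hv, _, hs⟩ := main_lemma r c hA
  exact ⟨fun l hl hsuf => hs l hl (hsuf.trans (tail_suffix _)), hv⟩
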